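/- Let A, A_1, A_2 be hyperplane arrangements with A_2 ⊆ A_1 ⊆ A, and suppose A_1 is a modular subarrangement of A. Then A_2 is a modular subarrangement of A_1 if and only if A_2 is a modular subarrangement of A. -/
import Mathlib


open Polynomial
open scoped Classical Pointwise

namespace HypArr

variable {K V : Type*} [Field K] [AddCommGroup V] [Module K V] [FiniteDimensional K V]

/-- `A` is an affine hyperplane arrangement: a finite set of affine hyperplanes,
i.e. nonempty affine subspaces of codimension one. -/
def IsArrangement (A : Finset (AffineSubspace K V)) : Prop :=
  ∀ H ∈ A, H ≠ ⊥ ∧ Module.finrank K V = Module.finrank K H.direction + 1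

/-- The intersection poset `L(A)`: all nonempty intersections of subfamilies of `A`
(the empty intersection being the whole space `⊤`).  The order of `L(A)` is *reverse*
inclusion, so `X ≤ Y` in `L(A)` corresponds to `Y ≤ X` as affine subspaces; the
minimal element `0̂` of `L(A)` is the whole space `⊤`. -/
noncomputable def poset (A : Finset (AffineSubspace K V)) : Finset (AffineSubspace K V) :=
  (A.powerset.image fun S => S.inf id).filter (· ≠ ⊥)

/-- The rank of an element of `L(A)`: its codimension in `V`. -/
noncomputable def rk (X : AffineSubspace K V) : ℕ :=
  Module.finrank K V - Module.finrank K X.direction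

/-- The rank `r(A)` of the arrangement: the maximal rank of an element of `L(A)`. -/
noncomputable def rank (A : Finset (AffineSubspace K V)) : ℕ := (poset A).sup rk

/-- An ideal of `L(A)` (with respect to the reverse-inclusion order of `L(A)`):
a downward closed subset of `L(A)`. -/
def IsIdeal (A I : Finset (AffineSubspace K V)) : Prop :=
  I ⊆ poset A ∧ ∀ X ∈ I, ∀ Y ∈ poset A, X ≤ Y → Y ∈ I

/-- The principal ideal `⟨X⟩ = {Y ∈ L(A) : Y ≤ X}` of `L(A)` (in the
reverse-inclusion order of `L(A)`, i.e. `{Y ∈ L(A) : X ⊆ Y}`). -/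
noncomputable def principal (A : Finset (AffineSubspace K V)) (X : AffineSubspace K V) :
    Finset (AffineSubspace K V) :=
  (poset A).filter fun Y => X ≤ Y

/-- The meet `X ∧ Y` in `L(A)`: the greatest element of `L(A)` below both `X` and `Y`
(in the reverse-inclusion order); in terms of affine subspaces it is the smallest
element of `L(A)` containing both `X` and `Y`.  In particular `X ∧ Y = 0̂` iff
`lmeet A X Y = ⊤`. -/
noncomputable def lmeet (A : Finset (AffineSubspace K V)) (X Y : AffineSubspace K V) :
    AffineSubspace K V :=
  sInf {W | W ∈ poset A ∧ X ≤ W ∧ Y ≤ W}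

/-- An ideal decomposition `{I_1, …, I_m}` of `L(A)`:
(I1) for every `X ∈ L(A) \ {0̂}` some `I j ∩ ⟨X⟩` is a nontrivial principal ideal;
(I2) joins `X_1 ∨ ⋯ ∨ X_m` (i.e. intersections) of members of the ideals exist;
(I3) these joins satisfy the rank condition. -/
def IsIdealDecomposition (A : Finset (AffineSubspace K V)) {m : ℕ}
    (I : Fin m → Finset (AffineSubspace K V)) : Prop :=
  (∀ i, IsIdeal A (I i)) ∧
  (∀ X ∈ poset A, X ≠ ⊤ →
    ∃ j, ∃ Z ∈ poset A, Z ≠ ⊤ ∧ I j ∩ principal A X = principal A Z) ∧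
  (∀ f : Fin m → AffineSubspace K V, (∀ i, f i ∈ I i) →
    Finset.univ.inf f ≠ (⊥ : AffineSubspace K V)) ∧
  (∀ f : Fin m → AffineSubspace K V, (∀ i, f i ∈ I i) →
    rk (Finset.univ.inf f) = ∑ i, rk (f i))

/-- The meet-complement `I^c = {Y ∈ L(A) : Y ∧ X = 0̂ for all X ∈ I}`. -/
noncomputable def meetCompl (A I : Finset (AffineSubspace K V)) : Finset (AffineSubspace K V) :=
  (poset A).filter fun Y => ∀ X ∈ I, lmeet A X Y = ⊤

/-- An ideal `I` is modular if `{I, I^c}` is an ideal decomposition of `L(A)`. -/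
def IsModularIdeal (A I : Finset (AffineSubspace K V)) : Prop :=
  IsIdealDecomposition A ![I, meetCompl A I]

/-- `μ` is the Möbius function `μ(0̂, ·)` of the finite intersection poset `P`
(ordered by reverse inclusion, with minimal element the maximal affine subspace in `P`):
the sum of `μ` over an interval `[0̂, X]` is `1` if `X = 0̂` and `0` otherwise. -/
def IsMobiusOn (P : Finset (AffineSubspace K V)) (μ : AffineSubspace K V → ℤ) : Prop :=
  ∀ X ∈ P, ∑ Z ∈ P.filter (fun Z => X ≤ Z), μ Z = if ∀ Z ∈ P, Z ≤ X then 1 else 0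

/-- The characteristic polynomial `χ(t) = ∑_{X ∈ P} μ(X) t^{dim X}` of an
intersection poset `P` with Möbius function `μ`. -/
noncomputable def charPolyOn (P : Finset (AffineSubspace K V)) (μ : AffineSubspace K V → ℤ) :
    Polynomial ℤ :=
  ∑ X ∈ P, C (μ X) * Polynomial.X ^ (Module.finrank K X.direction)

/-- The characteristic polynomial `χ̃(I, t) = ∑_{X ∈ I} μ(X) t^{r(I) - r(X)}` of an ideal. -/
noncomputable def tildeChi (μ : AffineSubspace K V → ℤ) (I : Finset (AffineSubspace K V)) :
    Polynomial ℤ :=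
  ∑ X ∈ I, C (μ X) * Polynomial.X ^ (I.sup rk - rk X)

/-- A central arrangement: the intersection of all hyperplanes is nonempty. -/
def IsCentral (A : Finset (AffineSubspace K V)) : Prop := A.inf id ≠ ⊥

/-- A modular element `Z ∈ L(A)`: `r(Z) + r(X) = r(Z ∧ X) + r(Z ∨ X)` for all `X ∈ L(A)`
(the join `Z ∨ X` being the intersection `Z ⊓ X` of affine subspaces). -/
def IsModularElement (A : Finset (AffineSubspace K V)) (Z : AffineSubspace K V) : Prop :=
  Z ∈ poset A ∧ ∀ X ∈ poset A, rk Z + rk X = rk (lmeet A Z X) + rk (Z ⊓ X)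

/-- The intersection poset of the restriction `B^W = {H ∩ W : H ∈ B, H ∩ W ≠ ∅}`
of the arrangement `B` to the affine subspace `W`, realized as a finset of affine
subspaces of the ambient space (with minimal element `W`). -/
noncomputable def tracePoset (B : Finset (AffineSubspace K V)) (W : AffineSubspace K V) :
    Finset (AffineSubspace K V) :=
  (((B.filter fun H => H ⊓ W ≠ ⊥).image fun H => H ⊓ W).powerset.image
      fun S => W ⊓ S.inf id).filter (· ≠ ⊥)

/-- A modular subarrangement `B ⊆ A`: `L(B)`, viewed as a subposet of `L(A)`,
is a modular ideal of `L(A)`. -/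
def IsModularSub (A B : Finset (AffineSubspace K V)) : Prop :=
  B ⊆ A ∧ IsModularIdeal A (poset B)

end HypArr

namespace HypArr

set_option linter.unusedSectionVars false

section AuxLemmas

variable {K V : Type*} [Field K] [AddCommGroup V] [Module K V] [FiniteDimensional K V]

-- basic lemmas
lemma aff_top_ne_bot : (⊤ : AffineSubspace K V) ≠ ⊥ := by
  intro h
  have h0 : (0 : V) ∈ (⊤ : AffineSubspace K V) := trivial
  rw [h] at h0
  simp [← AffineSubspace.mem_coe] at h0

lemma mem_poset {A : Finset (AffineSubspace K V)} {X : AffineSubspace K V} :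
    X ∈ poset A ↔ (∃ S ⊆ A, S.inf id = X) ∧ X ≠ ⊥ := by
  simp [poset, Finset.mem_filter, Finset.mem_image, Finset.mem_powerset]

lemma ne_bot_of_mem_poset {A : Finset (AffineSubspace K V)} {X : AffineSubspace K V}
    (h : X ∈ poset A) : X ≠ ⊥ := (mem_poset.mp h).2

lemma top_mem_poset {A : Finset (AffineSubspace K V)} : (⊤ : AffineSubspace K V) ∈ poset A :=
  mem_poset.mpr ⟨⟨∅, by simp, by simp⟩, aff_top_ne_bot⟩

lemma poset_mono {A B : Finset (AffineSubspace K V)} (h : A ⊆ B) : poset A ⊆ poset B := by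
  intro X hX
  obtain ⟨⟨S, hS, hSX⟩, hXb⟩ := mem_poset.mp hX
  exact mem_poset.mpr ⟨⟨S, hS.trans h, hSX⟩, hXb⟩

lemma inf_mem_poset {A : Finset (AffineSubspace K V)} {X Y : AffineSubspace K V}
    (hX : X ∈ poset A) (hY : Y ∈ poset A) (h : X ⊓ Y ≠ ⊥) : X ⊓ Y ∈ poset A := by
  obtain ⟨⟨S, hS, hSX⟩, _⟩ := mem_poset.mp hX
  obtain ⟨⟨T, hT, hTY⟩, _⟩ := mem_poset.mp hY
  exact mem_poset.mpr ⟨⟨S ∪ T, Finset.union_subset hS hT, by rw [Finset.inf_union, hSX, hTY]⟩, h⟩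


-- rank lemmas
lemma finrank_dir_le (X : AffineSubspace K V) :
    Module.finrank K X.direction ≤ Module.finrank K V := Submodule.finrank_le _

lemma rk_top : rk (⊤ : AffineSubspace K V) = 0 := by
  unfold rk
  rw [AffineSubspace.direction_top, finrank_top]
  omega

lemma rk_mono {X Y : AffineSubspace K V} (h : X ≤ Y) : rk Y ≤ rk X :=
  Nat.sub_le_sub_left (Submodule.finrank_mono (AffineSubspace.direction_le h)) _

lemma eq_of_le_of_rk_le {X Y : AffineSubspace K V} (hle : X ≤ Y) (hb : X ≠ ⊥)
    (hr : rk X ≤ rk Y) : X = Y := by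
  have hd := AffineSubspace.direction_le hle
  have h1 := finrank_dir_le X
  have h2 := finrank_dir_le Y
  have h3 := Submodule.finrank_mono hd
  have hfr : Module.finrank K Y.direction ≤ Module.finrank K X.direction := by
    unfold rk at hr; omega
  have hdeq : X.direction = Y.direction := Submodule.eq_of_le_of_finrank_le hd hfr
  obtain ⟨p, hp⟩ := (AffineSubspace.nonempty_iff_ne_bot X).mpr hb
  exact AffineSubspace.ext_of_direction_eq hdeq ⟨p, hp, hle hp⟩

lemma rk_lt_of_lt {X Y : AffineSubspace K V} (hle : X ≤ Y) (hb : X ≠ ⊥) (hne : X ≠ Y) :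
    rk Y < rk X := by
  rcases lt_or_ge (rk Y) (rk X) with h | h
  · exact h
  · exact absurd (eq_of_le_of_rk_le hle hb h) hne

lemma eq_top_of_rk_eq_zero {X : AffineSubspace K V} (hb : X ≠ ⊥) (h : rk X = 0) : X = ⊤ :=
  eq_of_le_of_rk_le le_top hb (by rw [rk_top, h])

lemma one_le_rk {X : AffineSubspace K V} (hb : X ≠ ⊥) (ht : X ≠ ⊤) : 1 ≤ rk X := by
  rcases Nat.eq_zero_or_pos (rk X) with h | h
  · exact absurd (eq_top_of_rk_eq_zero hb h) ht
  · exact h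

lemma rk_inf_le {X Y : AffineSubspace K V} (h : X ⊓ Y ≠ ⊥) :
    rk (X ⊓ Y) ≤ rk X + rk Y := by
  obtain ⟨p, hp⟩ := (AffineSubspace.nonempty_iff_ne_bot (X ⊓ Y)).mpr h
  have hp1 : p ∈ X := hp.1
  have hp2 : p ∈ Y := hp.2
  have hd : (X ⊓ Y).direction = X.direction ⊓ Y.direction :=
    AffineSubspace.direction_inf_of_mem hp1 hp2
  have hsum := Submodule.finrank_sup_add_finrank_inf_eq X.direction Y.direction
  have hsup : Module.finrank K ↥(X.direction ⊔ Y.direction) ≤ Module.finrank K V :=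
    Submodule.finrank_le _
  have h1 := finrank_dir_le X
  have h2 := finrank_dir_le Y
  unfold rk
  rw [hd]
  omega


-- NEW material
lemma finset_inf_mem_poset {A : Finset (AffineSubspace K V)} {S : Finset (AffineSubspace K V)}
    (hS : S ⊆ poset A) (h : S.inf id ≠ ⊥) : S.inf id ∈ poset A := by
  induction S using Finset.induction_on with
  | empty => simpa using top_mem_poset
  | @insert a s ha ih =>
      rw [Finset.inf_insert] at h ⊢
      have has : a ∈ poset A := hS (Finset.mem_insert_self a s)
      have hsb : s.inf id ≠ ⊥ := by
        intro hb
        rw [hb] at h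
        simp at h
      exact inf_mem_poset has (ih (fun x hx => hS (Finset.mem_insert_of_mem hx)) hsb) h

lemma exists_min_above (B : Finset (AffineSubspace K V)) {Z : AffineSubspace K V} (hZ : Z ≠ ⊥) :
    ∃ m ∈ poset B, Z ≤ m ∧ ∀ W ∈ poset B, Z ≤ W → m ≤ W := by
  set F := (poset B).filter (Z ≤ ·) with hF
  have hFs : F ⊆ poset B := Finset.filter_subset _ _
  have hZle : Z ≤ F.inf id := Finset.le_inf fun W hW => (Finset.mem_filter.mp hW).2
  have hne : F.inf id ≠ ⊥ := fun h => hZ (le_bot_iff.mp (h ▸ hZle))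
  refine ⟨F.inf id, finset_inf_mem_poset hFs hne, hZle, fun W hW hZW => ?_⟩
  exact Finset.inf_le (Finset.mem_filter.mpr ⟨hW, hZW⟩)

lemma lmeet_eq_top_iff {A : Finset (AffineSubspace K V)} {X Y : AffineSubspace K V} :
    lmeet A X Y = ⊤ ↔ ∀ W ∈ poset A, X ≤ W → Y ≤ W → W = ⊤ := by
  unfold lmeet
  rw [sInf_eq_top]
  constructor
  · intro h W hW h1 h2
    exact h W ⟨hW, h1, h2⟩
  · rintro h W ⟨hW, h1, h2⟩
    exact h W hW h1 h2

lemma mem_meetCompl_iff {A I : Finset (AffineSubspace K V)} (hI : IsIdeal A I)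
    {Y : AffineSubspace K V} :
    Y ∈ meetCompl A I ↔ Y ∈ poset A ∧ ∀ W ∈ I, Y ≤ W → W = ⊤ := by
  unfold meetCompl
  rw [Finset.mem_filter]
  constructor
  · rintro ⟨hY, h⟩
    refine ⟨hY, fun W hW hYW => ?_⟩
    have := (lmeet_eq_top_iff).mp (h W hW)
    exact this W (hI.1 hW) le_rfl hYW
  · rintro ⟨hY, h⟩
    refine ⟨hY, fun X hX => lmeet_eq_top_iff.mpr fun W hW hXW hYW => ?_⟩
    exact h W (hI.2 X hX W hW hXW) hYW

lemma meetCompl_subset {A I : Finset (AffineSubspace K V)} :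
    meetCompl A I ⊆ poset A := Finset.filter_subset _ _

lemma meetCompl_isIdeal {A I : Finset (AffineSubspace K V)} (hI : IsIdeal A I) :
    IsIdeal A (meetCompl A I) := by
  refine ⟨meetCompl_subset, fun Y hY Y' hY' hle => ?_⟩
  rw [mem_meetCompl_iff hI] at hY ⊢
  exact ⟨hY', fun W hW h => hY.2 W hW (hle.trans h)⟩

lemma top_mem_meetCompl {A I : Finset (AffineSubspace K V)} (hI : IsIdeal A I) :
    (⊤ : AffineSubspace K V) ∈ meetCompl A I :=
  (mem_meetCompl_iff hI).mpr ⟨top_mem_poset, fun W _ h => top_le_iff.mp h⟩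

lemma univ_inf_pair (f : Fin 2 → AffineSubspace K V) :
    Finset.univ.inf f = f 0 ⊓ f 1 := by
  rw [show (Finset.univ : Finset (Fin 2)) = {0, 1} from rfl]
  simp

lemma decomp_pair {A I₀ I₁ : Finset (AffineSubspace K V)}
    (hm : IsIdealDecomposition A ![I₀, I₁]) :
    ∀ X ∈ I₀, ∀ Y ∈ I₁, X ⊓ Y ≠ ⊥ ∧ rk (X ⊓ Y) = rk X + rk Y := by
  intro X hX Y hY
  have hf : ∀ i : Fin 2, ![X, Y] i ∈ ![I₀, I₁] i := by
    intro i
    fin_cases i <;> simpa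
  have h2 := hm.2.2.1 _ hf
  have h3 := hm.2.2.2 _ hf
  rw [univ_inf_pair] at h2 h3
  rw [Fin.sum_univ_two] at h3
  simp only [Matrix.cons_val_zero, Matrix.cons_val_one, Matrix.head_cons] at h2 h3
  exact ⟨h2, h3⟩

lemma mem_poset_of_mem_arr {A : Finset (AffineSubspace K V)} (hA : IsArrangement A)
    {H : AffineSubspace K V} (hH : H ∈ A) : H ∈ poset A :=
  mem_poset.mpr ⟨⟨{H}, Finset.singleton_subset_iff.mpr hH, Finset.inf_singleton⟩, (hA H hH).1⟩

lemma rk_hyp {A : Finset (AffineSubspace K V)} (hA : IsArrangement A)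
    {H : AffineSubspace K V} (hH : H ∈ A) : rk H = 1 := by
  have := (hA H hH).2
  unfold rk
  omega

lemma hyp_ne_top {A : Finset (AffineSubspace K V)} (hA : IsArrangement A)
    {H : AffineSubspace K V} (hH : H ∈ A) : H ≠ ⊤ := by
  intro h
  have h2 := (hA H hH).2
  rw [h, AffineSubspace.direction_top, finrank_top] at h2
  omega

lemma eq_hyp_of_le {A : Finset (AffineSubspace K V)} (hA : IsArrangement A)
    {H Z : AffineSubspace K V} (hH : H ∈ A) (hZ : Z ∈ poset A) (hZtop : Z ≠ ⊤)
    (hle : H ≤ Z) : Z = H := by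
  have h1 : rk Z ≤ rk H := rk_mono hle
  rw [rk_hyp hA hH] at h1
  have h2 : 1 ≤ rk Z := one_le_rk (ne_bot_of_mem_poset hZ) hZtop
  exact (eq_of_le_of_rk_le hle (hA H hH).1 (by rw [rk_hyp hA hH]; omega)).symm


lemma peel {A : Finset (AffineSubspace K V)} {Y : AffineSubspace K V}
    (hY : Y ∈ poset A) (hYtop : Y ≠ ⊤) :
    ∃ M ∈ poset A, ∃ H ∈ A, Y = M ⊓ H ∧ Y ≠ M := by
  obtain ⟨⟨S₀, hS₀sub, hS₀⟩, hYb⟩ := mem_poset.mp hY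
  set C : Finset (Finset (AffineSubspace K V)) :=
    A.powerset.filter (fun S => S.inf id = Y) with hCdef
  have hCne : C.Nonempty :=
    ⟨S₀, Finset.mem_filter.mpr ⟨Finset.mem_powerset.mpr hS₀sub, hS₀⟩⟩
  obtain ⟨S, hSC, hSmin⟩ := Finset.exists_min_image C Finset.card hCne
  have hSsub : S ⊆ A := Finset.mem_powerset.mp (Finset.mem_filter.mp hSC).1
  have hSinf : S.inf id = Y := (Finset.mem_filter.mp hSC).2
  have hSne : S.Nonempty := by
    rcases S.eq_empty_or_nonempty with rfl | h
    · simp at hSinf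
      exact absurd hSinf.symm hYtop
    · exact h
  obtain ⟨H, hH⟩ := hSne
  set M := (S.erase H).inf id with hMdef
  have hYHM : Y = H ⊓ M := by
    rw [← hSinf]
    conv_lhs => rw [← Finset.insert_erase hH]
    rw [Finset.inf_insert]
    rfl
  have hYleM : Y ≤ M := hYHM ▸ inf_le_right
  have hMb : M ≠ ⊥ := fun h => hYb (le_bot_iff.mp (h ▸ hYleM))
  have hM : M ∈ poset A :=
    mem_poset.mpr ⟨⟨S.erase H, (Finset.erase_subset H S).trans hSsub, rfl⟩, hMb⟩
  have hYM : Y ≠ M := by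
    intro h
    have hmem : S.erase H ∈ C := Finset.mem_filter.mpr
      ⟨Finset.mem_powerset.mpr ((Finset.erase_subset H S).trans hSsub), by rw [← hMdef, ← h]⟩
    have := hSmin (S.erase H) hmem
    have hlt := Finset.card_erase_lt_of_mem hH
    omega
  exact ⟨M, hM, H, hSsub hH, by rw [hYHM, inf_comm], hYM⟩

lemma dichotomy {A I₀ I₁ : Finset (AffineSubspace K V)} (hA : IsArrangement A)
    (h1 : ∀ X ∈ poset A, X ≠ ⊤ →
      ∃ j, ∃ Z ∈ poset A, Z ≠ ⊤ ∧ ![I₀, I₁] j ∩ principal A X = principal A Z)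
    {H : AffineSubspace K V} (hH : H ∈ A) : H ∈ I₀ ∨ H ∈ I₁ := by
  obtain ⟨j, Z, hZ, hZtop, heq⟩ := h1 H (mem_poset_of_mem_arr hA hH) (hyp_ne_top hA hH)
  have hZmem : Z ∈ principal A Z := Finset.mem_filter.mpr ⟨hZ, le_rfl⟩
  rw [← heq] at hZmem
  obtain ⟨hZI, hZpr⟩ := Finset.mem_inter.mp hZmem
  have hHZ : H ≤ Z := (Finset.mem_filter.mp hZpr).2
  have hZH : Z = H := eq_hyp_of_le hA hH hZ hZtop hHZ
  rw [hZH] at hZI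
  fin_cases j
  · left; simpa using hZI
  · right; simpa using hZI

lemma i1_general {B A₂ : Finset (AffineSubspace K V)} (hid : IsIdeal B (poset A₂)) :
    ∀ X ∈ poset B, X ≠ ⊤ →
      ∃ j, ∃ Z ∈ poset B, Z ≠ ⊤ ∧
        ![poset A₂, meetCompl B (poset A₂)] j ∩ principal B X = principal B Z := by
  intro X hX hXtop
  have hXb : X ≠ ⊥ := ne_bot_of_mem_poset hX
  by_cases hcase : ∃ W ∈ poset A₂, X ≤ W ∧ W ≠ ⊤
  · obtain ⟨W, hW, hXW, hWtop⟩ := hcase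
    obtain ⟨m, hm, hXm, hmin⟩ := exists_min_above A₂ hXb
    refine ⟨0, m, hid.1 hm, fun h => hWtop (top_le_iff.mp (h ▸ hmin W hW hXW)), ?_⟩
    simp only [Matrix.cons_val_zero]
    ext Y
    simp only [Finset.mem_inter, principal, Finset.mem_filter]
    constructor
    · rintro ⟨hY₂, hYB, hXY⟩
      exact ⟨hYB, hmin Y hY₂ hXY⟩
    · rintro ⟨hYB, hmY⟩
      exact ⟨hid.2 m hm Y hYB hmY, hYB, hXm.trans hmY⟩
  · push_neg at hcase
    have hXC : X ∈ meetCompl B (poset A₂) := (mem_meetCompl_iff hid).mpr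
      ⟨hX, fun W hW hXW => hcase W hW hXW⟩
    refine ⟨1, X, hX, hXtop, ?_⟩
    simp only [Matrix.cons_val_one, Matrix.head_cons]
    ext Y
    simp only [Finset.mem_inter, principal, Finset.mem_filter]
    constructor
    · rintro ⟨_, hYB, hXY⟩
      exact ⟨hYB, hXY⟩
    · rintro ⟨hYB, hXY⟩
      exact ⟨(meetCompl_isIdeal hid).2 X hXC Y hYB hXY, hYB, hXY⟩


/-- Key decomposition: if `A₁` is modular in `A`, every element of `L(A)` factors
rank-additively as a meet of an element of `L(A₁)` and an element of the meet-complement. -/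
lemma claimB {A A₁ : Finset (AffineSubspace K V)} (hA : IsArrangement A)
    (hm : IsIdealDecomposition A ![poset A₁, meetCompl A (poset A₁)]) :
    ∀ Y ∈ poset A, ∃ X' ∈ poset A₁, ∃ Q ∈ meetCompl A (poset A₁),
      Y = X' ⊓ Q ∧ rk Y = rk X' + rk Q := by
  have hid1 : IsIdeal A (poset A₁) := by simpa using hm.1 0
  have hpair := decomp_pair hm
  have hI1 := hm.2.1
  suffices h : ∀ n, ∀ Y ∈ poset A, rk Y = n → ∃ X' ∈ poset A₁, ∃ Q ∈ meetCompl A (poset A₁),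
      Y = X' ⊓ Q ∧ rk Y = rk X' + rk Q by
    intro Y hY
    exact h (rk Y) Y hY rfl
  intro n
  induction n using Nat.strong_induction_on with
  | _ n ih =>
  intro Y hY hrk
  subst hrk
  have hYb : Y ≠ ⊥ := ne_bot_of_mem_poset hY
  by_cases hYtop : Y = ⊤
  · subst hYtop
    exact ⟨⊤, top_mem_poset, ⊤, top_mem_meetCompl hid1, (inf_idem ⊤).symm, by rw [rk_top]⟩
  obtain ⟨M, hM, H, hHA, hYMH, hYneM⟩ := peel hY hYtop
  have hYleM : Y ≤ M := hYMH ▸ inf_le_left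
  have hYleH : Y ≤ H := hYMH ▸ inf_le_right
  have hMb : M ≠ ⊥ := ne_bot_of_mem_poset hM
  have hrkMlt : rk M < rk Y := rk_lt_of_lt hYleM hYb hYneM
  have hHP : H ∈ poset A := mem_poset_of_mem_arr hA hHA
  have hrkH : rk H = 1 := rk_hyp hA hHA
  have hrkYle : rk Y ≤ rk M + 1 := by
    have := rk_inf_le (X := M) (Y := H) (hYMH ▸ hYb)
    rw [← hYMH, hrkH] at this
    exact this
  have hrkY : rk Y = rk M + 1 := by omega
  obtain ⟨S_M, hS_M, Q_M, hQ_M, hMeq, hMrk⟩ := ih (rk M) hrkMlt M hM rfl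
  have hMleS : M ≤ S_M := hMeq ▸ inf_le_left
  have hMleQ : M ≤ Q_M := hMeq ▸ inf_le_right
  rcases dichotomy hA hI1 hHA with hHP₁ | hHC₁
  · -- H ∈ poset A₁
    have hNb : S_M ⊓ H ≠ ⊥ := fun h => hYb (le_bot_iff.mp (h ▸ le_inf (hYleM.trans hMleS) hYleH))
    have hN : S_M ⊓ H ∈ poset A₁ := inf_mem_poset hS_M hHP₁ hNb
    have hYNQ : Y = (S_M ⊓ H) ⊓ Q_M := by
      rw [hYMH, hMeq, inf_right_comm]
    exact ⟨S_M ⊓ H, hN, Q_M, hQ_M, hYNQ, by rw [hYNQ]; exact (hpair _ hN _ hQ_M).2⟩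
  · -- H ∈ meetCompl A (poset A₁)
    by_cases hS_Mtop : S_M = ⊤
    · -- case B-ii
      have hMQ : M = Q_M := by rw [hMeq, hS_Mtop, top_inf_eq]
      by_cases hYC : Y ∈ meetCompl A (poset A₁)
      · exact ⟨⊤, top_mem_poset, Y, hYC, (top_inf_eq Y).symm, by rw [rk_top]; omega⟩
      · have : ¬(Y ∈ poset A ∧ ∀ W ∈ poset A₁, Y ≤ W → W = ⊤) := by
          rw [← mem_meetCompl_iff hid1]; exact hYC
        push_neg at this
        obtain ⟨W₀, hW₀, hYW₀, hW₀top⟩ := this hY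
        have hW₀b : W₀ ≠ ⊥ := ne_bot_of_mem_poset (hid1.1 hW₀)
        have hMC : M ∈ meetCompl A (poset A₁) := hMQ ▸ hQ_M
        obtain ⟨hWMb, hWMrk⟩ := hpair W₀ hW₀ M hMC
        have hYleWM : Y ≤ W₀ ⊓ M := le_inf hYW₀ hYleM
        have h1 : rk (W₀ ⊓ M) ≤ rk Y := rk_mono hYleWM
        have hW₀1 : 1 ≤ rk W₀ := one_le_rk hW₀b hW₀top
        have hW₀rk : rk W₀ = 1 := by omega
        have hEq : Y = W₀ ⊓ M := eq_of_le_of_rk_le hYleWM hYb (by omega)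
        exact ⟨W₀, hW₀, M, hMC, hEq, by omega⟩
    · -- case B-i
      have hQ_MP : Q_M ∈ poset A := meetCompl_subset hQ_M
      have hYleQ : Y ≤ Q_M ⊓ H := le_inf (hYleM.trans hMleQ) hYleH
      have hQb : Q_M ⊓ H ≠ ⊥ := fun h => hYb (le_bot_iff.mp (h ▸ hYleQ))
      have hQP : Q_M ⊓ H ∈ poset A := inf_mem_poset hQ_MP hHP hQb
      have hrkQle : rk (Q_M ⊓ H) ≤ rk Q_M + 1 := by
        have := rk_inf_le hQb
        rw [hrkH] at this
        exact this
      have hS1 : 1 ≤ rk S_M := one_le_rk (ne_bot_of_mem_poset (hid1.1 hS_M)) hS_Mtop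
      obtain ⟨X_Q, hX_Q, Q_Q, hQ_Q, hQeq, hQrk⟩ :=
        ih (rk (Q_M ⊓ H)) (by omega) (Q_M ⊓ H) hQP rfl
      have hYleX'' : Y ≤ S_M ⊓ X_Q :=
        le_inf (hYleM.trans hMleS) (hYleQ.trans (hQeq ▸ inf_le_left))
      have hX''b : S_M ⊓ X_Q ≠ ⊥ := fun h => hYb (le_bot_iff.mp (h ▸ hYleX''))
      have hX'' : S_M ⊓ X_Q ∈ poset A₁ := inf_mem_poset hS_M hX_Q hX''b
      have hYeq : Y = (S_M ⊓ X_Q) ⊓ Q_Q := by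
        calc Y = M ⊓ H := hYMH
        _ = (S_M ⊓ Q_M) ⊓ H := by rw [← hMeq]
        _ = S_M ⊓ (Q_M ⊓ H) := inf_assoc _ _ _
        _ = S_M ⊓ (X_Q ⊓ Q_Q) := by rw [← hQeq]
        _ = (S_M ⊓ X_Q) ⊓ Q_Q := (inf_assoc _ _ _).symm
      exact ⟨S_M ⊓ X_Q, hX'', Q_Q, hQ_Q, hYeq, by rw [hYeq]; exact (hpair _ hX'' _ hQ_Q).2⟩



end AuxLemmas

/-- **Corollary.** Let `A₂ ⊆ A₁ ⊆ A` with `A₁` a modular subarrangement of `A`.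
Then `A₂` is modular in `A₁` if and only if `A₂` is modular in `A`. -/
theorem modularSub_trans_iff
    {K V : Type*} [Field K] [AddCommGroup V] [Module K V] [FiniteDimensional K V]
    (A A₁ A₂ : Finset (AffineSubspace K V)) (hA : IsArrangement A)
    (h21 : A₂ ⊆ A₁) (h1 : A₁ ⊆ A) (hmod : IsModularSub A A₁) :
    IsModularSub A₁ A₂ ↔ IsModularSub A A₂ := by
  obtain ⟨h1A, hmdec⟩ := hmod
  have hid1 : IsIdeal A (poset A₁) := by simpa using hmdec.1 0
  have hpair1 := decomp_pair hmdec
  constructor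
  · rintro ⟨-, hdec2⟩
    obtain ⟨hids, hi1, hi2, hi3⟩ := hdec2
    have hid2₁ : IsIdeal A₁ (poset A₂) := by simpa using hids 0
    have hid2 : IsIdeal A (poset A₂) := by
      refine ⟨hid2₁.1.trans (poset_mono h1), fun X hX Y hY hle => ?_⟩
      exact hid2₁.2 X hX Y (hid1.2 X (hid2₁.1 hX) Y hY hle) hle
    have hpair2 : ∀ X ∈ poset A₂, ∀ Y ∈ meetCompl A₁ (poset A₂),
        X ⊓ Y ≠ ⊥ ∧ rk (X ⊓ Y) = rk X + rk Y :=
      decomp_pair ⟨hids, hi1, hi2, hi3⟩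
    have key : ∀ X ∈ poset A₂, ∀ Y ∈ meetCompl A (poset A₂),
        X ⊓ Y ≠ ⊥ ∧ rk (X ⊓ Y) = rk X + rk Y := by
      intro X hX Y hY
      have hYP : Y ∈ poset A := meetCompl_subset hY
      obtain ⟨Y', hY', Y'', hY'', hYeq, hYrk⟩ := claimB hA hmdec Y hYP
      have hYleY' : Y ≤ Y' := hYeq ▸ inf_le_left
      have hY'C : Y' ∈ meetCompl A (poset A₂) :=
        (meetCompl_isIdeal hid2).2 Y hY Y' (hid1.1 hY') hYleY'
      have hY'C₁ : Y' ∈ meetCompl A₁ (poset A₂) := (mem_meetCompl_iff hid2₁).mpr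
        ⟨hY', ((mem_meetCompl_iff hid2).mp hY'C).2⟩
      obtain ⟨p2, p3⟩ := hpair2 X hX Y' hY'C₁
      have hU : X ⊓ Y' ∈ poset A₁ := inf_mem_poset (hid2₁.1 hX) hY' p2
      obtain ⟨q2, q3⟩ := hpair1 (X ⊓ Y') hU Y'' hY''
      constructor
      · rw [hYeq, ← inf_assoc]
        exact q2
      · rw [hYeq, ← inf_assoc, q3, p3, ← hYeq, hYrk]
        omega
    refine ⟨h21.trans h1, ?_, i1_general hid2, ?_, ?_⟩
    · intro i
      fin_cases i
      · simpa using hid2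
      · simpa using meetCompl_isIdeal hid2
    · intro f hf
      have h0 : f 0 ∈ poset A₂ := by simpa using hf 0
      have h1' : f 1 ∈ meetCompl A (poset A₂) := by simpa using hf 1
      rw [univ_inf_pair]
      exact (key _ h0 _ h1').1
    · intro f hf
      have h0 : f 0 ∈ poset A₂ := by simpa using hf 0
      have h1' : f 1 ∈ meetCompl A (poset A₂) := by simpa using hf 1
      rw [univ_inf_pair, Fin.sum_univ_two]
      exact (key _ h0 _ h1').2
  · rintro ⟨-, hdec2⟩
    obtain ⟨hids, hi1, hi2, hi3⟩ := hdec2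
    have hid2 : IsIdeal A (poset A₂) := by simpa using hids 0
    have hid2₁ : IsIdeal A₁ (poset A₂) :=
      ⟨poset_mono h21, fun X hX Y hY hle => hid2.2 X hX Y (poset_mono h1 hY) hle⟩
    have hpair2 : ∀ X ∈ poset A₂, ∀ Y ∈ meetCompl A (poset A₂),
        X ⊓ Y ≠ ⊥ ∧ rk (X ⊓ Y) = rk X + rk Y :=
      decomp_pair ⟨hids, hi1, hi2, hi3⟩
    have key : ∀ X ∈ poset A₂, ∀ Y ∈ meetCompl A₁ (poset A₂),
        X ⊓ Y ≠ ⊥ ∧ rk (X ⊓ Y) = rk X + rk Y := by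
      intro X hX Y hY
      have hYC : Y ∈ meetCompl A (poset A₂) := by
        obtain ⟨hYP₁, hcond⟩ := (mem_meetCompl_iff hid2₁).mp hY
        exact (mem_meetCompl_iff hid2).mpr ⟨poset_mono h1 hYP₁, hcond⟩
      exact hpair2 X hX Y hYC
    refine ⟨h21, ?_, i1_general hid2₁, ?_, ?_⟩
    · intro i
      fin_cases i
      · simpa using hid2₁
      · simpa using meetCompl_isIdeal hid2₁
    · intro f hf
      have h0 : f 0 ∈ poset A₂ := by simpa using hf 0
      have h1' : f 1 ∈ meetCompl A₁ (poset A₂) := by simpa using hf 1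
      rw [univ_inf_pair]
      exact (key _ h0 _ h1').1
    · intro f hf
      have h0 : f 0 ∈ poset A₂ := by simpa using hf 0
      have h1' : f 1 ∈ meetCompl A₁ (poset A₂) := by simpa using hf 1
      rw [univ_inf_pair, Fin.sum_univ_two]
      exact (key _ h0 _ h1').2

end HypArr
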